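/- Let K be a finite type, for each k ∈ K let n k be a finite nonempty type, let ρ k ∈ Matrix (n k) (n k) ℂ be a positive semidefinite state, and let q : K → ℝ be a probability vector (q k ≥ 0, Σ q k = 1). Then the von Neumann entropy of the block-diagonal state blockDiagonal' (fun k => (q k) • ρ k) equals Σ_k Real.negMulLog (q k) + Σ_k (q k) · H(ρ k). -/

import Mathlib

open scoped ComplexOrder

/-- The von Neumann entropy of a (positive semidefinite) matrix. -/
noncomputable def vNEntropy {n : Type*} [Fintype n] [DecidableEq n]
    (ρ : Matrix n n ℂ) : ℝ :=
  (Matrix.trace (cfc Real.negMulLog ρ)).re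

section aux

variable {K : Type*} [Fintype K] [DecidableEq K]
    {n : K → Type*} [∀ k, Fintype (n k)] [∀ k, DecidableEq (n k)]

open Matrix in
lemma spectrum_block_subset (M : ∀ k, Matrix (n k) (n k) ℂ) (k : K) :
    spectrum ℝ (M k) ⊆ spectrum ℝ (blockDiagonal' M) := by
  intro x hx
  rw [spectrum.mem_iff] at hx ⊢
  contrapose! hx
  have hbd : algebraMap ℝ _ x - blockDiagonal' M
      = blockDiagonal' (fun j => algebraMap ℝ (Matrix (n j) (n j) ℂ) x - M j) := by
    have h0 : (fun j => algebraMap ℝ (Matrix (n j) (n j) ℂ) x - M j)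
        = (x • (1 : ∀ j, Matrix (n j) (n j) ℂ)) - M := by
      funext j; rw [Algebra.algebraMap_eq_smul_one]; rfl
    rw [Algebra.algebraMap_eq_smul_one, h0, Matrix.blockDiagonal'_sub,
      Matrix.blockDiagonal'_smul, Matrix.blockDiagonal'_one]
  rw [hbd] at hx
  obtain ⟨u, hu⟩ := hx
  set N : ∀ j, Matrix (n j) (n j) ℂ :=
    fun j => algebraMap ℝ (Matrix (n j) (n j) ℂ) x - M j with hN
  have hBC : blockDiagonal' N * (↑u⁻¹ : Matrix (Σ k, n k) (Σ k, n k) ℂ) = 1 := by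
    rw [← hu]; exact u.mul_inv
  set C : Matrix (Σ k, n k) (Σ k, n k) ℂ := (↑u⁻¹ : Matrix (Σ k, n k) (Σ k, n k) ℂ)
  have key : N k * (Matrix.of fun i j => C ⟨k, i⟩ ⟨k, j⟩) = 1 := by
    ext i j
    have h1 : (blockDiagonal' N * C) ⟨k, i⟩ ⟨k, j⟩ = (1 : Matrix (Σ k, n k) (Σ k, n k) ℂ) ⟨k, i⟩ ⟨k, j⟩ := by
      rw [hBC]
    rw [Matrix.mul_apply] at h1
    have h2 : ∑ j' : (Σ l, n l), blockDiagonal' N ⟨k, i⟩ j' * C j' ⟨k, j⟩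
        = ∑ l, ∑ i', blockDiagonal' N ⟨k, i⟩ ⟨l, i'⟩ * C ⟨l, i'⟩ ⟨k, j⟩ := by
      rw [← Finset.univ_sigma_univ, Finset.sum_sigma]
    rw [h2] at h1
    have h3 : ∀ l ∈ Finset.univ, l ≠ k →
        (∑ i', blockDiagonal' N ⟨k, i⟩ ⟨l, i'⟩ * C ⟨l, i'⟩ ⟨k, j⟩) = 0 := by
      intro l _ hl
      refine Finset.sum_eq_zero fun i' _ => ?_
      rw [blockDiagonal'_apply_ne N i i' (Ne.symm hl), zero_mul]
    rw [Finset.sum_eq_single_of_mem k (Finset.mem_univ k) h3] at h1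
    simp only [blockDiagonal'_apply_eq] at h1
    rw [Matrix.mul_apply]
    simp only [Matrix.of_apply]
    rw [h1, Matrix.one_apply, Matrix.one_apply]
    by_cases hij : i = j
    · simp [hij]
    · rw [if_neg hij, if_neg (by simp [Sigma.ext_iff, hij])]
  exact @isUnit_of_invertible _ _ _ (invertibleOfRightInverse _ _ key)

lemma continuousOn_spectrum_matrix {m : Type*} [Fintype m] [DecidableEq m]
    (A : Matrix m m ℂ) (g : ℝ → ℝ) : ContinuousOn g (spectrum ℝ A) := by
  have : DiscreteTopology (spectrum ℝ A) := Finite.instDiscreteTopology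
  rw [continuousOn_iff_continuous_restrict]
  exact continuous_of_discreteTopology

open Matrix in
/-- The block-diagonal embedding as an `ℝ`-algebra homomorphism. -/
noncomputable def bdAlgHom (n : K → Type*) [∀ k, Fintype (n k)] [∀ k, DecidableEq (n k)] :
    (∀ k, Matrix (n k) (n k) ℂ) →ₐ[ℝ] Matrix (Σ k, n k) (Σ k, n k) ℂ :=
  { Matrix.blockDiagonal'RingHom n ℂ with
    commutes' := fun r => by
      show blockDiagonal' (algebraMap ℝ (∀ k, Matrix (n k) (n k) ℂ) r) = _
      rw [Algebra.algebraMap_eq_smul_one, Algebra.algebraMap_eq_smul_one (A := Matrix (Σ k, n k) (Σ k, n k) ℂ),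
        blockDiagonal'_smul, blockDiagonal'_one] }

open Matrix Polynomial in
lemma cfc_blockDiagonal' (M : ∀ k, Matrix (n k) (n k) ℂ) (hM : ∀ k, (M k).IsHermitian)
    (f : ℝ → ℝ) (hf : Continuous f) :
    cfc f (blockDiagonal' M) = blockDiagonal' fun k => cfc f (M k) := by
  classical
  have hA : (blockDiagonal' M).IsHermitian := by
    rw [Matrix.IsHermitian, blockDiagonal'_conjTranspose]
    exact congrArg _ (funext fun k => hM k)
  have hA' : IsSelfAdjoint (blockDiagonal' M) := hA
  have hsa : ∀ k, IsSelfAdjoint (M k) := fun k => hM k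
  set s := (Matrix.finite_real_spectrum (A := blockDiagonal' M)).toFinset with hs
  set p := Lagrange.interpolate s id f with hpdef
  have hp : ∀ x ∈ spectrum ℝ (blockDiagonal' M), p.eval x = f x := by
    intro x hx
    have hxs : x ∈ s := by simpa [hs] using hx
    exact Lagrange.eval_interpolate_at_node f (Set.injOn_id _) hxs
  have e1 : cfc f (blockDiagonal' M) = cfc p.eval (blockDiagonal' M) :=
    cfc_congr (fun x hx => (hp x hx).symm)
  have e2 : ∀ k, cfc f (M k) = cfc p.eval (M k) := fun k =>
    cfc_congr (fun x hx => (hp x (spectrum_block_subset M k hx)).symm)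
  rw [e1, cfc_polynomial p (blockDiagonal' M) hA']
  have e3 : (fun k => cfc f (M k)) = fun k => aeval (M k) p :=
    funext fun k => (e2 k).trans (cfc_polynomial p (M k) (hsa k))
  rw [e3]
  have e4 : (fun k => aeval (M k) p) = aeval M p :=
    funext fun k => Polynomial.aeval_algHom_apply
      (Pi.evalAlgHom ℝ (fun j => Matrix (n j) (n j) ℂ) k) M p
  rw [e4]
  exact Polynomial.aeval_algHom_apply (bdAlgHom n) M p

end aux

/-- Entropy of a block-diagonal mixture: for states `ρ k` and a probability vector `q`,
`H(⊕_k q_k ρ_k) = H(q) + ∑_k q_k H(ρ_k)`. -/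
theorem vNEntropy_blockDiagonal'
    {K : Type*} [Fintype K] [DecidableEq K]
    (n : K → Type*) [∀ k, Fintype (n k)] [∀ k, DecidableEq (n k)] [∀ k, Nonempty (n k)]
    (ρ : ∀ k, Matrix (n k) (n k) ℂ)
    (hρ : ∀ k, (ρ k).PosSemidef) (hρtr : ∀ k, (ρ k).trace = 1)
    (q : K → ℝ) (hq0 : ∀ k, 0 ≤ q k) (hq1 : ∑ k, q k = 1) :
    vNEntropy (Matrix.blockDiagonal' fun k => q k • ρ k)
      = ∑ k, Real.negMulLog (q k) + ∑ k, q k * vNEntropy (ρ k) := by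
  classical
  have hsa : ∀ k, IsSelfAdjoint (ρ k) := fun k => (hρ k).1
  have hσH : ∀ k, (q k • ρ k).IsHermitian := fun k =>
    (IsSelfAdjoint.smul (star_trivial (q k)) (hsa k) : IsSelfAdjoint (q k • ρ k))
  have key := cfc_blockDiagonal' (fun k => q k • ρ k) hσH Real.negMulLog
    Real.continuous_negMulLog
  have hblock : ∀ k, Matrix.trace (cfc Real.negMulLog (q k • ρ k))
      = (Real.negMulLog (q k) : ℂ) + (q k : ℂ) * Matrix.trace (cfc Real.negMulLog (ρ k)) := by
    intro k
    have hsk : IsSelfAdjoint (ρ k) := hsa k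
    have h1 : cfc Real.negMulLog (q k • ρ k)
        = Real.negMulLog (q k) • ρ k + q k • cfc Real.negMulLog (ρ k) := by
      have h2 : (fun x => Real.negMulLog (q k • x))
          = fun x => Real.negMulLog (q k) * x + q k * Real.negMulLog x := by
        funext x; rw [smul_eq_mul, Real.negMulLog_mul]; ring
      rw [← cfc_comp_smul (q k) Real.negMulLog (ρ k)
          Real.continuous_negMulLog.continuousOn hsk, h2,
        cfc_add (a := ρ k) _ _ (by fun_prop) (by fun_prop),
        cfc_const_mul_id (Real.negMulLog (q k)) (ρ k) hsk,
        cfc_const_mul (q k) Real.negMulLog (ρ k) (by fun_prop)]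
    rw [h1, Matrix.trace_add, Matrix.trace_smul, Matrix.trace_smul, hρtr k]
    simp [Complex.real_smul]
  show (Matrix.trace (cfc Real.negMulLog (Matrix.blockDiagonal' fun k => q k • ρ k))).re = _
  rw [key, Matrix.trace_blockDiagonal', Complex.re_sum]
  have : ∀ k, (Matrix.trace (cfc Real.negMulLog (q k • ρ k))).re
      = Real.negMulLog (q k) + q k * vNEntropy (ρ k) := by
    intro k
    rw [hblock k]
    simp [vNEntropy, Complex.re_ofReal_mul]
  rw [Finset.sum_congr rfl fun k _ => this k, Finset.sum_add_distrib]
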